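/- For |q|<1 and nonzero y, z with y + 1/y ≠ z + 1/z (and denominators nonzero): ∑_{n≥1} q^n (qy;q)_{n-1} (q/y;q)_{n-1} / ((qz;q)_n (q/z;q)_n) = (1/(y + y^{-1} - z - z^{-1})) · (1 - (qy;q)_∞ (q/y;q)_∞ / ((qz;q)_∞ (q/z;q)_∞)). -/

import Mathlib

open scoped BigOperators

noncomputable def qPoch (a q : ℂ) (n : ℕ) : ℂ := ∏ j ∈ Finset.range n, (1 - a * q ^ j)

noncomputable def qPochInf (a q : ℂ) : ℂ := ∏' j : ℕ, (1 - a * q ^ j)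

/-!
Write `P_a(n) = (qa, q/a; q)_n`. Its `n`-th factor is `1 - (a + a⁻¹) q^{n+1} + q^{2n+2}`, so
`P_y(n)/P_z(n) - P_y(n+1)/P_z(n+1) = (y + y⁻¹ - z - z⁻¹) q^{n+1} P_y(n)/P_z(n+1)`
and the series telescopes to `(1 - lim P_y/P_z) / (y + y⁻¹ - z - z⁻¹)`. The products converge,
and the limit of `P_z` is nonzero because a convergent product of nonvanishing factors `1 - a q^j`
is nonzero; so `P_y(n)/P_z(n+1)` is bounded and the series converges absolutely.
-/

open Filter Topology

lemma hasSum_sub_succ_of_tendsto {E : Type*} [AddCommGroup E] [TopologicalSpace E]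
    [IsTopologicalAddGroup E] [T2Space E] {f : ℕ → E} {l : E} (hf : Tendsto f atTop (𝓝 l))
    (hs : Summable fun n => f n - f (n + 1)) : HasSum (fun n => f n - f (n + 1)) (f 0 - l) := by
  rw [hs.hasSum_iff_tendsto_nat]
  simp_rw [Finset.sum_range_sub']
  exact tendsto_const_nhds.sub hf

lemma summable_pow_mul_of_tendsto {R : Type*} [NormedRing R] [NormOneClass R] [CompleteSpace R]
    {q : R} (hq : ‖q‖ < 1) {b : ℕ → R} {l : R} (hb : Tendsto b atTop (𝓝 l)) :
    Summable fun n => q ^ n * b n := by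
  obtain ⟨K, hK⟩ := hb.norm.bddAbove_range
  refine .of_norm_bounded ((summable_geometric_of_lt_one (norm_nonneg q) hq).mul_right K)
    fun n => ?_
  calc ‖q ^ n * b n‖ ≤ ‖q‖ ^ n * ‖b n‖ :=
        (norm_mul_le _ _).trans (mul_le_mul_of_nonneg_right (norm_pow_le _ _) (norm_nonneg _))
    _ ≤ ‖q‖ ^ n * K := by gcongr; exact hK ⟨n, rfl⟩

lemma qPoch_succ (a q : ℂ) (n : ℕ) : qPoch a q (n + 1) = qPoch a q n * (1 - a * q ^ n) :=
  Finset.prod_range_succ _ _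

section QPochhammer

variable {q : ℂ}

lemma summable_norm_mul_pow (a : ℂ) (hq : ‖q‖ < 1) :
    Summable fun j : ℕ => ‖a * q ^ j‖ := by
  simpa [norm_mul, norm_pow] using (summable_geometric_of_lt_one (norm_nonneg q) hq).mul_left ‖a‖

lemma tendsto_qPoch_qPochInf (a : ℂ) (hq : ‖q‖ < 1) :
    Tendsto (qPoch a q) atTop (𝓝 (qPochInf a q)) := by
  have : Multipliable fun j : ℕ => 1 + -(a * q ^ j) :=
    multipliable_one_add_of_summable (by simpa using summable_norm_mul_pow a hq)
  simp_rw [← sub_eq_add_neg] at this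
  exact this.hasProd.tendsto_prod_nat

lemma qPochInf_ne_zero {a : ℂ} (hq : ‖q‖ < 1) (h : ∀ n, qPoch a q n ≠ 0) :
    qPochInf a q ≠ 0 := by
  have hfac (j : ℕ) : 1 + -(a * q ^ j) ≠ 0 := by
    rw [← sub_eq_add_neg]
    exact right_ne_zero_of_mul (qPoch_succ a q j ▸ h (j + 1))
  simpa [qPochInf, sub_eq_add_neg] using
    tprod_one_add_ne_zero_of_summable hfac (by simpa using summable_norm_mul_pow a hq)

/-- `(qa, q/a; q)_n` -/
noncomputable def qPochPair (a q : ℂ) (n : ℕ) : ℂ := qPoch (q * a) q n * qPoch (q / a) q n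

lemma tendsto_qPochPair (a : ℂ) (hq : ‖q‖ < 1) :
    Tendsto (qPochPair a q) atTop (𝓝 (qPochInf (q * a) q * qPochInf (q / a) q)) :=
  (tendsto_qPoch_qPochInf _ hq).mul (tendsto_qPoch_qPochInf _ hq)

lemma qPochPair_succ {a : ℂ} (ha : a ≠ 0) (n : ℕ) :
    qPochPair a q (n + 1) =
      qPochPair a q n * (1 - (a + a⁻¹) * q ^ (n + 1) + (q ^ (n + 1)) ^ 2) := by
  simp only [qPochPair, qPoch_succ]
  field_simp
  ring

lemma qPochPair_div_sub_succ {y z : ℂ} (hy : y ≠ 0) (hz : z ≠ 0) (n : ℕ)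
    (hD : qPochPair z q (n + 1) ≠ 0) :
    qPochPair y q n / qPochPair z q n - qPochPair y q (n + 1) / qPochPair z q (n + 1) =
      (y + y⁻¹ - z - z⁻¹) * (q ^ (n + 1) * qPochPair y q n / qPochPair z q (n + 1)) := by
  rw [qPochPair_succ hz] at hD ⊢
  rw [qPochPair_succ hy, div_sub_div _ _ (left_ne_zero_of_mul hD) hD, mul_div_assoc',
    div_eq_div_iff (mul_ne_zero (left_ne_zero_of_mul hD) hD) hD]
  ring

end QPochhammer

theorem stmt_18_general (q y z : ℂ) (hq : ‖q‖ < 1) (hy : y ≠ 0) (hz : z ≠ 0)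
    (hne : y + y⁻¹ ≠ z + z⁻¹)
    (hden : ∀ n : ℕ, qPoch (q * z) q n * qPoch (q / z) q n ≠ 0) :
    (∑' n : ℕ, q ^ (n + 1) * qPoch (q * y) q n * qPoch (q / y) q n /
        (qPoch (q * z) q (n + 1) * qPoch (q / z) q (n + 1))) =
      1 / (y + y⁻¹ - z - z⁻¹) *
        (1 - qPochInf (q * y) q * qPochInf (q / y) q /
          (qPochInf (q * z) q * qPochInf (q / z) q)) := by
  have hc : y + y⁻¹ - z - z⁻¹ ≠ 0 := by rwa [sub_sub, sub_ne_zero]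
  have hDInf : qPochInf (q * z) q * qPochInf (q / z) q ≠ 0 :=
    mul_ne_zero (qPochInf_ne_zero hq fun n => left_ne_zero_of_mul (hden n))
      (qPochInf_ne_zero hq fun n => right_ne_zero_of_mul (hden n))
  have hratio : Tendsto (fun n => qPochPair y q n / qPochPair z q n) atTop
      (𝓝 (qPochInf (q * y) q * qPochInf (q / y) q / (qPochInf (q * z) q * qPochInf (q / z) q))) :=
    (tendsto_qPochPair y hq).div (tendsto_qPochPair z hq) hDInf
  have hterms : Summable fun n => q ^ (n + 1) * qPochPair y q n / qPochPair z q (n + 1) := by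
    have hshift : Tendsto (fun n => qPochPair y q n / qPochPair z q (n + 1)) atTop _ :=
      (tendsto_qPochPair y hq).div
        ((tendsto_qPochPair z hq).comp (tendsto_add_atTop_nat 1)) hDInf
    refine ((summable_pow_mul_of_tendsto hq hshift).mul_left q).congr fun n => ?_
    ring
  have htel := hasSum_sub_succ_of_tendsto hratio
    ((hterms.mul_left _).congr fun n => (qPochPair_div_sub_succ hy hz n (hden (n + 1))).symm)
  have hstart : qPochPair y q 0 / qPochPair z q 0 = 1 := by simp [qPochPair, qPoch]
  simp only [qPochPair_div_sub_succ hy hz _ (hden (_ + 1)), hstart] at htel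
  rw [one_div, ← (htel.mul_left (y + y⁻¹ - z - z⁻¹)⁻¹).tsum_eq]
  simp only [inv_mul_cancel_left₀ hc, qPochPair, mul_assoc]

theorem stmt_18 (q y z : ℂ) (hq : ‖q‖ < 1) (hy : y ≠ 0) (hz : z ≠ 0)
    (hne : y + y⁻¹ ≠ z + z⁻¹)
    (hden : ∀ n : ℕ, qPoch (q * z) q n * qPoch (q / z) q n ≠ 0)
    (hdenInf : qPochInf (q * z) q * qPochInf (q / z) q ≠ 0) :
    (∑' n : ℕ, q ^ (n + 1) * qPoch (q * y) q n * qPoch (q / y) q n /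
        (qPoch (q * z) q (n + 1) * qPoch (q / z) q (n + 1))) =
      1 / (y + y⁻¹ - z - z⁻¹) *
        (1 - qPochInf (q * y) q * qPochInf (q / y) q /
          (qPochInf (q * z) q * qPochInf (q / z) q)) :=
  stmt_18_general q y z hq hy hz hne hden
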